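/- For real x with x ≠ 0, ±2, and all n ≥ 2, the derivative of the Oresme polynomial satisfies O_n'(x) = (x²(2n − x²)·O_n(x) − 2n·O_{n−2}(x)) / (x³(x² − 4)). -/

import Mathlib

/-!
Differentiating the recurrence gives `O'ₙ₊₂ = O'ₙ₊₁ + 2x⁻³ Oₙ - x⁻² O'ₙ`, and this preserves the
identity `x (x² - 4) O'ₙ₊₁ = (4(n + 1) - x²) Oₙ₊₁ - 2(n + 1) Oₙ`, which therefore holds for all `n`
by two-step induction. Eliminating `Oₙ₊₁ = Oₙ₊₂ + x⁻² Oₙ` turns it into the stated formula.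
-/

noncomputable def oresme : ℕ → ℝ → ℝ
  | 0 => fun _ => 0
  | 1 => fun x => 1/x
  | (n+2) => fun x => oresme (n+1) x - (1/x^2) * oresme n x

theorem oresme_add_two (n : ℕ) (x : ℝ) :
    oresme (n + 2) x = oresme (n + 1) x - 1 / x ^ 2 * oresme n x :=
  rfl

theorem hasDerivAt_one_div_sq {x : ℝ} (hx : x ≠ 0) :
    HasDerivAt (fun y : ℝ => 1 / y ^ 2) (-2 / x ^ 3) x := by
  simp only [one_div]
  refine ((hasDerivAt_pow 2 x).inv (pow_ne_zero 2 hx)).congr_deriv ?_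
  field_simp
  ring

theorem HasDerivAt.oresme_add_two {n : ℕ} {x a b : ℝ} (hx : x ≠ 0)
    (ha : HasDerivAt (oresme n) a x) (hb : HasDerivAt (oresme (n + 1)) b x) :
    HasDerivAt (oresme (n + 2)) (b - (-2 / x ^ 3 * oresme n x + 1 / x ^ 2 * a)) x :=
  hb.sub ((hasDerivAt_one_div_sq hx).mul ha)

theorem hasDerivAt_oresme_succ {x : ℝ} (hx : x ≠ 0) (hx4 : x ^ 2 - 4 ≠ 0) :
    ∀ n : ℕ, HasDerivAt (oresme (n + 1))
      (((4 * (n + 1) - x ^ 2) * oresme (n + 1) x - 2 * (n + 1) * oresme n x) /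
        (x * (x ^ 2 - 4))) x
  | 0 => by
    have h : HasDerivAt (oresme 1) (-(x ^ 2)⁻¹) x := by
      simpa only [oresme, one_div] using hasDerivAt_inv hx
    convert h using 1
    simp only [oresme]
    field_simp
    ring
  | 1 => by
    have h0 : HasDerivAt (oresme 0) 0 x := hasDerivAt_const x 0
    convert h0.oresme_add_two hx (hasDerivAt_oresme_succ hx hx4 0) using 1
    simp only [oresme]
    field_simp
    ring
  | n + 2 => by
    convert (hasDerivAt_oresme_succ hx hx4 n).oresme_add_two hx
      (hasDerivAt_oresme_succ hx hx4 (n + 1)) using 1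
    simp only [oresme_add_two]
    push_cast
    field_simp
    ring

theorem oresme_deriv (x : ℝ) (hx : x ≠ 0) (hx2 : x ≠ 2) (hx2' : x ≠ -2)
    (n : ℕ) (hn : 2 ≤ n) :
    deriv (oresme n) x =
      (x^2 * (2*n - x^2) * oresme n x - 2*n * oresme (n-2) x) / (x^3 * (x^2 - 4)) := by
  obtain ⟨m, rfl⟩ : ∃ m, n = m + 2 := ⟨n - 2, by omega⟩
  have hx4 : x ^ 2 - 4 ≠ 0 := by
    rw [sub_ne_zero, show (4 : ℝ) = 2 ^ 2 by norm_num, Ne, sq_eq_sq_iff_eq_or_eq_neg]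
    tauto
  rw [(hasDerivAt_oresme_succ hx hx4 (m + 1)).deriv, Nat.add_sub_cancel, oresme_add_two]
  push_cast
  field_simp
  ring
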